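/- In the Equal-Filling algorithm, let f(θ) for θ ∈ [0,1] be the number of agents of a fixed class i with final utility at least θ. Then for every θ ∈ (0,1] and every other class j, the optimistic value of class i for class j's fractional bundle satisfies V*ᵢ(Yⱼ) ≤ ∫₀^θ f(z) dz + f(θ). -/

import Mathlib

open Finset

noncomputable section

variable {A : Type*} [Fintype A] [DecidableEq A] {k : ℕ}

/-- The set of agents that like the item arriving at step `t`. -/
def likersAt (L : List (Finset A)) (t : ℕ) : Finset A := L.getD t ∅

/-- The agents of class `i`. -/
def classAgents (classOf : A → Fin k) (i : Fin k) : Finset A :=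
  Finset.univ.filter fun a => classOf a = i

/-- One step of the Equal-Filling algorithm: given current utilities `u` and the
liker set of the arriving item, the item is split equally among classes with an
unsaturated liking agent (each class receives `min β (demand)` where `β` is largest
with total at most 1), and within each class it is water-filled among the liking
agents, raising the lowest utilities to a common level `γ`. Returns the fraction of
the item given to each agent. -/
def efStep (classOf : A → Fin k) (u : A → ℝ) (likers : Finset A) : A → ℝ :=
  let d : Fin k → ℝ := fun i => ∑ a ∈ likers.filter fun a => classOf a = i, (1 - u a)
  let β : ℝ := sSup {b : ℝ | b ≤ 1 ∧ ∑ i : Fin k, min b (d i) ≤ 1}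
  fun a =>
    if a ∈ likers then
      let i := classOf a
      let γ : ℝ := sSup {g : ℝ | g ≤ 1 ∧
        ∑ a' ∈ likers.filter fun a' => classOf a' = i, max (g - u a') 0 ≤ min β (d i)}
      max (γ - u a) 0
    else 0

/-- The utility (total fraction received) of each agent before step `t` of
Equal-Filling on instance `L`. -/
def efUtil (classOf : A → Fin k) (L : List (Finset A)) : ℕ → A → ℝ
  | 0 => fun _ => 0
  | t + 1 => fun a =>
      efUtil classOf L t a + efStep classOf (efUtil classOf L t) (likersAt L t) a

/-- The fraction of item `t` given to each agent by Equal-Filling. -/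
def efAlloc (classOf : A → Fin k) (L : List (Finset A)) (t : ℕ) : A → ℝ :=
  efStep classOf (efUtil classOf L t) (likersAt L t)


/-- Optimistic fractional valuation `V*` of the class with agents `C` for an item
bundle `y`. -/
def VstarFrac (L : List (Finset A)) (C : Finset A) (y : ℕ → ℝ) : ℝ :=
  sSup {v : ℝ | ∃ x : ℕ → A → ℝ,
    (∀ t a, 0 ≤ x t a) ∧
    (∀ t a, x t a ≠ 0 → a ∈ C ∧ a ∈ likersAt L t ∧ t < L.length) ∧
    (∀ t, ∑ a ∈ C, x t a ≤ y t) ∧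
    (∀ a, ∑ t ∈ Finset.range L.length, x t a ≤ 1) ∧
    v = ∑ t ∈ Finset.range L.length, ∑ a ∈ C, x t a}

/-- `efCount classOf L i θ` is the number of agents of class `i` whose final utility
under Equal-Filling is at least `θ`. -/
def efCount (classOf : A → Fin k) (L : List (Finset A)) (i : Fin k) (θ : ℝ) : ℝ :=
  ((classAgents classOf i).filter fun a => θ ≤ efUtil classOf L L.length a).card

/-! By the layer-cake formula, `∫₀^θ f = ∑_{a ∈ Nᵢ} min θ (uₐ)` with `uₐ` the final utility. In a
fractional assignment of class `j`'s bundle to class `i`, the agents with `uₐ ≥ θ` receive at most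
`1` each, hence at most `f(θ)` together. An agent with `uₐ < θ` can only receive parts of items it
likes, and at such a step its class's water level stays below `θ ≤ 1`: class `i` is then not
saturated, so it gets at least class `j`'s share, and all of it goes to agents below `θ`. Hence
class `j`'s share of that item is at most the increase of `∑_{a ∈ Nᵢ} min θ (uₐ)`, which
telescopes to `∫₀^θ f`. -/

def classDemand (classOf : A → Fin k) (u : A → ℝ) (likers : Finset A) (i : Fin k) : ℝ :=
  ∑ a ∈ likers.filter fun a => classOf a = i, (1 - u a)

def classShare (classOf : A → Fin k) (u : A → ℝ) (likers : Finset A) : ℝ :=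
  sSup {b : ℝ | b ≤ 1 ∧ ∑ i : Fin k, min b (classDemand classOf u likers i) ≤ 1}

def fillAmount (classOf : A → Fin k) (u : A → ℝ) (likers : Finset A) (i : Fin k) (g : ℝ) : ℝ :=
  ∑ a ∈ likers.filter fun a => classOf a = i, max (g - u a) 0

def waterLevel (classOf : A → Fin k) (u : A → ℝ) (likers : Finset A) (i : Fin k) : ℝ :=
  sSup {g : ℝ | g ≤ 1 ∧ fillAmount classOf u likers i g ≤
    min (classShare classOf u likers) (classDemand classOf u likers i)}

lemma min_add_max_sub_sub_min {γ θ v : ℝ} (h : γ ≤ θ) :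
    min θ (v + max (γ - v) 0) - min θ v = max (γ - v) 0 := by
  rcases le_total γ v with hv | hv
  · simp [max_eq_right (sub_nonpos.2 hv)]
  · rw [max_eq_left (sub_nonneg.2 hv), add_sub_cancel, min_eq_right h, min_eq_right (hv.trans h)]

section WaterFilling

omit [Fintype A] [DecidableEq A]

variable {classOf : A → Fin k} {u : A → ℝ} {likers : Finset A}

lemma continuous_fillAmount (i : Fin k) : Continuous (fillAmount classOf u likers i) := by
  unfold fillAmount; fun_prop

lemma fillAmount_zero (hu0 : ∀ a, 0 ≤ u a) (i : Fin k) : fillAmount classOf u likers i 0 = 0 :=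
  sum_eq_zero fun a _ => max_eq_right (by linarith [hu0 a])

lemma fillAmount_one (hu1 : ∀ a, u a ≤ 1) (i : Fin k) :
    fillAmount classOf u likers i 1 = classDemand classOf u likers i :=
  sum_congr rfl fun a _ => max_eq_left (by linarith [hu1 a])

lemma classDemand_nonneg (hu1 : ∀ a, u a ≤ 1) (i : Fin k) : 0 ≤ classDemand classOf u likers i :=
  sum_nonneg fun a _ => sub_nonneg.2 (hu1 a)

lemma classShare_nonneg (hu1 : ∀ a, u a ≤ 1) : 0 ≤ classShare classOf u likers :=
  le_csSup ⟨1, fun _ hb => hb.1⟩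
    ⟨zero_le_one, by simp [min_eq_left (classDemand_nonneg hu1 _)]⟩

lemma waterLevel_le_one (i : Fin k) : waterLevel classOf u likers i ≤ 1 :=
  Real.sSup_le (fun _ hg => hg.1) zero_le_one

lemma fillAmount_waterLevel (hu0 : ∀ a, 0 ≤ u a) (hu1 : ∀ a, u a ≤ 1) (i : Fin k) :
    fillAmount classOf u likers i (waterLevel classOf u likers i) =
      min (classShare classOf u likers) (classDemand classOf u likers i) := by
  set c := min (classShare classOf u likers) (classDemand classOf u likers i)
  have hbdd : BddAbove {g : ℝ | g ≤ 1 ∧ fillAmount classOf u likers i g ≤ c} :=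
    ⟨1, fun _ hg => hg.1⟩
  have hzero : (0 : ℝ) ≤ 1 ∧ fillAmount classOf u likers i 0 ≤ c := by
    rw [fillAmount_zero hu0]
    exact ⟨zero_le_one, le_min (classShare_nonneg hu1) (classDemand_nonneg hu1 i)⟩
  have hclosed : IsClosed {g : ℝ | g ≤ 1 ∧ fillAmount classOf u likers i g ≤ c} :=
    (isClosed_le continuous_id continuous_const).inter
      (isClosed_le (continuous_fillAmount i) continuous_const)
  obtain ⟨hle_one, hle⟩ := hclosed.csSup_mem ⟨0, hzero⟩ hbdd
  refine hle.antisymm (not_lt.1 fun hlt => ?_)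
  -- by the intermediate value theorem the level could be raised further
  have hc : c ≤ fillAmount classOf u likers i 1 := fillAmount_one hu1 i ▸ min_le_right _ _
  obtain ⟨g, hg, hgc⟩ :=
    intermediate_value_Icc hle_one (continuous_fillAmount i).continuousOn ⟨hlt.le, hc⟩
  have hg_eq : g = waterLevel classOf u likers i := (le_csSup hbdd ⟨hg.2, hgc.le⟩).antisymm hg.1
  rw [hg_eq] at hgc
  exact hlt.ne hgc

lemma waterLevel_eq_one_of_classDemand_le (hu1 : ∀ a, u a ≤ 1) {i : Fin k}
    (h : classDemand classOf u likers i ≤ classShare classOf u likers) :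
    waterLevel classOf u likers i = 1 :=
  (waterLevel_le_one i).antisymm <| le_csSup ⟨1, fun _ hg => hg.1⟩
    ⟨le_rfl, by rw [fillAmount_one hu1, min_eq_right h]⟩

end WaterFilling

section Step

omit [Fintype A]

variable {classOf : A → Fin k} {u : A → ℝ} {likers : Finset A}

lemma efStep_apply (a : A) : efStep classOf u likers a =
    if a ∈ likers then max (waterLevel classOf u likers (classOf a) - u a) 0 else 0 := rfl

lemma efStep_nonneg (a : A) : 0 ≤ efStep classOf u likers a := by
  rw [efStep_apply]
  split_ifs
  exacts [le_max_right _ _, le_rfl]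

lemma efStep_le_one_sub (hu1 : ∀ a, u a ≤ 1) (a : A) : efStep classOf u likers a ≤ 1 - u a := by
  rw [efStep_apply]
  split_ifs
  · have hγ : waterLevel classOf u likers (classOf a) ≤ 1 := waterLevel_le_one _
    exact max_le (by linarith) (sub_nonneg.2 (hu1 a))
  · exact sub_nonneg.2 (hu1 a)

lemma waterLevel_le_add_efStep {a : A} (ha : a ∈ likers) :
    waterLevel classOf u likers (classOf a) ≤ u a + efStep classOf u likers a := by
  rw [efStep_apply, if_pos ha]
  linarith [le_max_left (waterLevel classOf u likers (classOf a) - u a) 0]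

end Step

section ClassShare

variable {classOf : A → Fin k} {u : A → ℝ} {likers : Finset A}

omit [DecidableEq A] in
lemma mem_classAgents {i : Fin k} {a : A} : a ∈ classAgents classOf i ↔ classOf a = i := by
  simp [classAgents]

lemma classAgents_filter_mem (j : Fin k) :
    (classAgents classOf j).filter (· ∈ likers) = likers.filter (classOf · = j) := by
  ext a
  simp [classAgents, and_comm]

lemma sum_efStep_classAgents (hu0 : ∀ a, 0 ≤ u a) (hu1 : ∀ a, u a ≤ 1) (j : Fin k) :
    ∑ a ∈ classAgents classOf j, efStep classOf u likers a =
      min (classShare classOf u likers) (classDemand classOf u likers j) := by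
  rw [← fillAmount_waterLevel hu0 hu1 j, fillAmount, ← classAgents_filter_mem, sum_filter]
  refine sum_congr rfl fun a ha => ?_
  rw [efStep_apply, mem_classAgents.1 ha]

lemma sum_efStep_classAgents_le (hu0 : ∀ a, 0 ≤ u a) (hu1 : ∀ a, u a ≤ 1) {i : Fin k}
    (hi : waterLevel classOf u likers i < 1) (j : Fin k) :
    ∑ a ∈ classAgents classOf j, efStep classOf u likers a ≤
      ∑ a ∈ classAgents classOf i, efStep classOf u likers a := by
  have hshare : classShare classOf u likers < classDemand classOf u likers i :=
    not_le.1 fun h => hi.ne (waterLevel_eq_one_of_classDemand_le hu1 h)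
  rw [sum_efStep_classAgents hu0 hu1, sum_efStep_classAgents hu0 hu1, min_eq_left hshare.le]
  exact min_le_left _ _

lemma sum_min_add_efStep_sub_min {i : Fin k} {θ : ℝ} (hθ : waterLevel classOf u likers i ≤ θ) :
    ∑ a ∈ classAgents classOf i, (min θ (u a + efStep classOf u likers a) - min θ (u a)) =
      ∑ a ∈ classAgents classOf i, efStep classOf u likers a := by
  refine sum_congr rfl fun a ha => ?_
  rw [efStep_apply, mem_classAgents.1 ha]
  split_ifs
  · exact min_add_max_sub_sub_min hθ
  · simp

end ClassShare

open MeasureTheory in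
lemma integral_indicator_Iic_one {θ c : ℝ} (hθ : 0 ≤ θ) (hc : 0 ≤ c) :
    ∫ z in (0 : ℝ)..θ, (Set.Iic c).indicator 1 z = min θ c := by
  rw [intervalIntegral.integral_of_le hθ, integral_indicator_one measurableSet_Iic,
    measureReal_restrict_apply measurableSet_Iic, Set.inter_comm, Set.Ioc_inter_Iic,
    Real.volume_real_Ioc, sub_zero, max_eq_left (le_min hθ hc)]

open MeasureTheory in
lemma integral_card_filter_le {ι : Type*} (s : Finset ι) {F : ι → ℝ} (hF : ∀ a ∈ s, 0 ≤ F a)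
    {θ : ℝ} (hθ : 0 ≤ θ) :
    ∫ z in (0 : ℝ)..θ, ((s.filter fun a => z ≤ F a).card : ℝ) = ∑ a ∈ s, min θ (F a) := by
  have hsum : ∀ z, ((s.filter fun a => z ≤ F a).card : ℝ) =
      ∑ a ∈ s, (Set.Iic (F a)).indicator 1 z := by
    intro z
    rw [natCast_card_filter]
    exact sum_congr rfl fun a _ => by simp [Set.indicator_apply]
  have hint : ∀ a ∈ s, IntervalIntegrable ((Set.Iic (F a)).indicator 1) volume 0 θ :=
    fun a _ => intervalIntegrable_iff.2 <|
      (intervalIntegrable_iff.1 (intervalIntegrable_const (c := (1 : ℝ)))).indicator measurableSet_Iic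
  simp_rw [hsum]
  rw [intervalIntegral.integral_finsetSum hint]
  exact sum_congr rfl fun a ha => integral_indicator_Iic_one hθ (hF a ha)

section Utility

omit [Fintype A]

variable {classOf : A → Fin k} {L : List (Finset A)}

lemma efUtil_succ (t : ℕ) (a : A) :
    efUtil classOf L (t + 1) a = efUtil classOf L t a + efAlloc classOf L t a := rfl

lemma efUtil_mem_Icc (t : ℕ) (a : A) : efUtil classOf L t a ∈ Set.Icc 0 1 := by
  induction t generalizing a with
  | zero => simp [efUtil]
  | succ t ih =>
    have h0 : 0 ≤ efAlloc classOf L t a := efStep_nonneg a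
    have h1 : efAlloc classOf L t a ≤ 1 - efUtil classOf L t a :=
      efStep_le_one_sub (fun b => (ih b).2) a
    rw [efUtil_succ]
    exact ⟨by linarith [(ih a).1], by linarith⟩

lemma monotone_efUtil (a : A) : Monotone fun t => efUtil classOf L t a :=
  monotone_nat_of_le_succ fun _ => le_add_of_nonneg_right (efStep_nonneg a)

end Utility

section Bound

variable {classOf : A → Fin k} {L : List (Finset A)}

lemma integral_efCount (i : Fin k) {θ : ℝ} (hθ : 0 ≤ θ) :
    ∫ z in (0 : ℝ)..θ, efCount classOf L i z =
      ∑ a ∈ classAgents classOf i, min θ (efUtil classOf L L.length a) :=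
  integral_card_filter_le _ (fun a _ => (efUtil_mem_Icc _ a).1) hθ

lemma sum_efAlloc_le_sum_min_sub_min {i : Fin k} {θ : ℝ} (hθ : θ ≤ 1) {t : ℕ} {a₀ : A}
    (ha₀ : classOf a₀ = i) (hlike : a₀ ∈ likersAt L t) (hlow : efUtil classOf L (t + 1) a₀ < θ)
    (j : Fin k) :
    ∑ a ∈ classAgents classOf j, efAlloc classOf L t a ≤
      ∑ a ∈ classAgents classOf i,
        (min θ (efUtil classOf L (t + 1) a) - min θ (efUtil classOf L t a)) := by
  have hγ : waterLevel classOf (efUtil classOf L t) (likersAt L t) i < θ :=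
    ha₀ ▸ (waterLevel_le_add_efStep hlike).trans_lt hlow
  calc ∑ a ∈ classAgents classOf j, efAlloc classOf L t a
      ≤ ∑ a ∈ classAgents classOf i, efAlloc classOf L t a :=
        sum_efStep_classAgents_le (fun a => (efUtil_mem_Icc t a).1)
          (fun a => (efUtil_mem_Icc t a).2) (hγ.trans_le hθ) j
    _ = _ := (sum_min_add_efStep_sub_min hγ.le).symm

lemma sum_filter_not_le_le_sum_min_sub_min {i j : Fin k} {θ : ℝ} (hθ : θ ≤ 1) {t : ℕ}
    (ht : t < L.length) (x : A → ℝ) (hx0 : ∀ a, 0 ≤ x a)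
    (hsupp : ∀ a, x a ≠ 0 → a ∈ likersAt L t)
    (hxy : ∑ a ∈ classAgents classOf i, x a ≤ ∑ a ∈ classAgents classOf j, efAlloc classOf L t a) :
    ∑ a ∈ (classAgents classOf i).filter (fun a => ¬ θ ≤ efUtil classOf L L.length a), x a ≤
      ∑ a ∈ classAgents classOf i,
        (min θ (efUtil classOf L (t + 1) a) - min θ (efUtil classOf L t a)) := by
  by_cases h : ∃ a ∈ (classAgents classOf i).filter
      (fun a => ¬ θ ≤ efUtil classOf L L.length a), x a ≠ 0
  · obtain ⟨a₀, ha₀, hx⟩ := h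
    rw [mem_filter, mem_classAgents, not_le] at ha₀
    have hlow : efUtil classOf L (t + 1) a₀ < θ := (monotone_efUtil a₀ ht).trans_lt ha₀.2
    calc _ ≤ ∑ a ∈ classAgents classOf i, x a :=
          sum_le_sum_of_subset_of_nonneg (filter_subset _ _) fun a _ _ => hx0 a
      _ ≤ _ := hxy
      _ ≤ _ := sum_efAlloc_le_sum_min_sub_min hθ ha₀.1 (hsupp a₀ hx) hlow j
  · rw [sum_eq_zero fun a ha => not_not.1 fun hx => h ⟨a, ha, hx⟩]
    exact sum_nonneg fun a _ => sub_nonneg.2 (min_le_min_left θ (monotone_efUtil a t.le_succ))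

lemma sum_le_of_feasible {i j : Fin k} {θ : ℝ} (hθ : θ ∈ Set.Ioc 0 1) (x : ℕ → A → ℝ)
    (hx0 : ∀ t a, 0 ≤ x t a) (hsupp : ∀ t a, x t a ≠ 0 → a ∈ likersAt L t)
    (hxy : ∀ t, ∑ a ∈ classAgents classOf i, x t a ≤
      ∑ a ∈ classAgents classOf j, efAlloc classOf L t a)
    (hcap : ∀ a, ∑ t ∈ range L.length, x t a ≤ 1) :
    ∑ t ∈ range L.length, ∑ a ∈ classAgents classOf i, x t a ≤
      ∑ a ∈ classAgents classOf i, min θ (efUtil classOf L L.length a) + efCount classOf L i θ := by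
  have hhigh : ∑ a ∈ (classAgents classOf i).filter (fun a => θ ≤ efUtil classOf L L.length a),
      ∑ t ∈ range L.length, x t a ≤ efCount classOf L i θ :=
    (sum_le_sum fun a _ => hcap a).trans_eq (by simp [efCount])
  have hlow : ∑ a ∈ (classAgents classOf i).filter (fun a => ¬ θ ≤ efUtil classOf L L.length a),
      ∑ t ∈ range L.length, x t a ≤
        ∑ a ∈ classAgents classOf i, min θ (efUtil classOf L L.length a) := by
    calc _ = ∑ t ∈ range L.length, ∑ a ∈ (classAgents classOf i).filter
            (fun a => ¬ θ ≤ efUtil classOf L L.length a), x t a := sum_comm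
      _ ≤ ∑ t ∈ range L.length, ∑ a ∈ classAgents classOf i,
            (min θ (efUtil classOf L (t + 1) a) - min θ (efUtil classOf L t a)) :=
          sum_le_sum fun t ht => sum_filter_not_le_le_sum_min_sub_min hθ.2 (mem_range.1 ht)
            (x t) (hx0 t) (hsupp t) (hxy t)
      _ = ∑ a ∈ classAgents classOf i, ∑ t ∈ range L.length,
            (min θ (efUtil classOf L (t + 1) a) - min θ (efUtil classOf L t a)) := sum_comm
      _ = _ := sum_congr rfl fun a _ => by
          rw [sum_range_sub (fun t => min θ (efUtil classOf L t a))]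
          simp [efUtil, hθ.1.le]
  rw [sum_comm, ← sum_filter_add_sum_filter_not _ (fun a => θ ≤ efUtil classOf L L.length a)]
  linarith

end Bound

theorem stmt_18_general {A : Type*} [Fintype A] [DecidableEq A] {k : ℕ}
    (classOf : A → Fin k) (L : List (Finset A)) (i j : Fin k)
    (θ : ℝ) (hθ : θ ∈ Set.Ioc (0 : ℝ) 1) :
    VstarFrac L (classAgents classOf i)
        (fun t => ∑ a ∈ classAgents classOf j, efAlloc classOf L t a) ≤
      (∫ z in (0 : ℝ)..θ, efCount classOf L i z) + efCount classOf L i θ := by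
  rw [integral_efCount i hθ.1.le]
  refine Real.sSup_le ?_ (add_nonneg
    (sum_nonneg fun a _ => le_min hθ.1.le (efUtil_mem_Icc _ a).1) (Nat.cast_nonneg _))
  rintro _ ⟨x, hx0, hsupp, hxy, hcap, rfl⟩
  exact sum_le_of_feasible hθ x hx0 (fun t a h => (hsupp t a h).2.1) hxy hcap

/-- Key bound for Equal-Filling: letting `f(θ)` be the number of agents of class `i`
with final utility at least `θ`, for every `θ ∈ (0,1]` and every other class `j`,
class `i`'s optimistic value for class `j`'s fractional bundle is at most
`∫₀^θ f(z) dz + f(θ)`. -/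
theorem stmt_18 {A : Type*} [Fintype A] [DecidableEq A] {k : ℕ}
    (classOf : A → Fin k) (L : List (Finset A)) (i j : Fin k) (hij : j ≠ i)
    (θ : ℝ) (hθ : θ ∈ Set.Ioc (0 : ℝ) 1) :
    VstarFrac L (classAgents classOf i)
        (fun t => ∑ a ∈ classAgents classOf j, efAlloc classOf L t a) ≤
      (∫ z in (0 : ℝ)..θ, efCount classOf L i z) + efCount classOf L i θ :=
  stmt_18_general classOf L i j θ hθ

end
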